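/- For every 0 < p \le 1/4 and k \ge 2, the polynomial f_{p,k}(x) = \sum_{j=0}^k \frac{p^{\binom{j}{2}}}{j!} x^j has k distinct real roots, all of which are negative. -/

import Mathlib

/-!
Write `a_j = p^(j choose 2) / j!` (`coeff`) and `b_j = a_{j-1} / a_j = j / p^(j-1)` (`coeffRatio`).
For `p ≤ 1/4` we have `4 b_m < b_{m+1}`, so at a point `-s` with `2 b_m < s < b_{m+1} / 2` the
terms `a_j s^j` more than double up to `j = m` and more than halve after it. The alternating sums
on either side of the `m`-th term are then each smaller than half of it, so `f_{p,k}(-s)` has the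
sign `(-1)^m`. Choosing such points `s_0 < ⋯ < s_k`, the intermediate value theorem gives a root in
each of the `k` intervals `(-s_{m+1}, -s_m)`.
-/

open Finset Set

theorem neg_one_pow_mul_neg_one_pow_add {R : Type*} [Monoid R] [HasDistribNeg R] (a b : ℕ) :
    (-1 : R) ^ a * (-1) ^ (a + b) = (-1) ^ b := by
  rw [pow_add, ← mul_assoc, ← pow_add, (Even.add_self a).neg_one_pow, one_mul]

theorem neg_one_pow_mul_alternating_sum_reflect {R : Type*} [CommRing R]
    (A : ℕ → R) (m : ℕ) :
    (-1) ^ m * ∑ j ∈ range m, (-1) ^ j * A j = -∑ i ∈ range m, (-1) ^ i * A (m - 1 - i) := by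
  rw [← sum_range_reflect, mul_sum, ← sum_neg_distrib]
  refine sum_congr rfl fun i hi ↦ ?_
  nth_rewrite 1 [show m = m - 1 - i + (i + 1) by have := mem_range.1 hi; omega]
  rw [← mul_assoc, mul_comm ((-1 : R) ^ (m - 1 - i + (i + 1))), neg_one_pow_mul_neg_one_pow_add,
    pow_succ]
  ring

section AlternatingSum

variable {R : Type*} [CommRing R] [LinearOrder R] [IsStrictOrderedRing R]

theorem alternating_sum_mem_Icc {g : ℕ → R} (hg0 : ∀ i, 0 ≤ g i) (hg : Antitone g) (n : ℕ) :
    ∑ i ∈ range n, (-1) ^ i * g i ∈ Icc 0 (g 0) := by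
  induction n generalizing g with
  | zero => simpa using hg0 0
  | succ n ih =>
    obtain ⟨h0, h1⟩ := ih (fun i ↦ hg0 (i + 1)) (hg.comp_monotone add_left_mono)
    have hstep : ∑ i ∈ range (n + 1), (-1) ^ i * g i
        = g 0 - ∑ i ∈ range n, (-1) ^ i * g (i + 1) := by
      simp only [sum_range_succ', pow_succ, pow_zero, one_mul, mul_neg_one, neg_mul,
        sum_neg_distrib]
      ring
    rw [hstep]
    exact ⟨by linarith [hg (Nat.zero_le 1)], by linarith⟩

theorem neg_one_pow_mul_alternating_sum_pos {A : ℕ → R} (hA : ∀ j, 0 ≤ A j) {m n : ℕ}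
    (hmn : m ≤ n) (hbelow : ∀ j < m, 2 * A j < A (j + 1))
    (habove : ∀ j, m ≤ j → 2 * A (j + 1) < A j) :
    0 < (-1) ^ m * ∑ j ∈ range (n + 1), (-1) ^ j * A j := by
  obtain ⟨t, rfl⟩ := Nat.exists_eq_add_of_le hmn
  set L := ∑ i ∈ range m, (-1) ^ i * A (m - 1 - i)
  set U := ∑ i ∈ range t, (-1) ^ i * A (m + 1 + i)
  have hupper : (-1) ^ m * ∑ i ∈ range t, (-1) ^ (m + (i + 1)) * A (m + (i + 1)) = -U := by
    rw [mul_sum, ← sum_neg_distrib]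
    refine sum_congr rfl fun i _ ↦ ?_
    rw [← mul_assoc, neg_one_pow_mul_neg_one_pow_add, pow_succ, ← add_assoc, add_right_comm]
    ring
  have hsplit : (-1) ^ m * ∑ j ∈ range (m + t + 1), (-1) ^ j * A j = A m - L - U := by
    rw [add_assoc, sum_range_add, sum_range_succ', mul_add, mul_add, neg_one_pow_mul_alternating_sum_reflect, hupper, add_zero,
      ← mul_assoc, ← pow_add, (Even.add_self m).neg_one_pow, one_mul]
    ring
  have hL : 2 * L < A m := by
    rcases m with _ | r
    · simp only [L, range_zero, sum_empty, mul_zero]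
      linarith [habove 0 le_rfl, hA 1]
    · have hanti : Antitone fun i ↦ A (r - i) := antitone_nat_of_succ_le fun i ↦ by
        rcases le_or_gt r i with h | h
        · rw [Nat.sub_eq_zero_of_le h, Nat.sub_eq_zero_of_le (by omega)]
        · have := hbelow (r - (i + 1)) (by omega)
          rw [show r - (i + 1) + 1 = r - i by omega] at this
          linarith [hA (r - (i + 1))]
      have := (alternating_sum_mem_Icc (fun i ↦ hA _) hanti (r + 1)).2
      rw [Nat.sub_zero] at this
      simp only [L, Nat.add_sub_cancel]
      linarith [hbelow r (by omega)]
  have hU : 2 * U < A m := by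
    have hanti : Antitone fun i ↦ A (m + 1 + i) := antitone_nat_of_succ_le fun i ↦ by
      rw [← add_assoc]
      linarith [habove (m + 1 + i) (by omega), hA (m + 1 + i + 1)]
    have := (alternating_sum_mem_Icc (fun i ↦ hA _) hanti t).2
    linarith [habove m le_rfl]
  rw [hsplit]
  linarith

end AlternatingSum

theorem exists_mem_Ioo_eq_zero_of_mul_neg {f : ℝ → ℝ} {a b : ℝ} (hab : a ≤ b)
    (hf : ContinuousOn f (Icc a b)) (h : f a * f b < 0) : ∃ x ∈ Ioo a b, f x = 0 := by
  rcases mul_neg_iff.1 h with ⟨ha, hb⟩ | ⟨ha, hb⟩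
  exacts [intermediate_value_Ioo' hab hf ⟨hb, ha⟩, intermediate_value_Ioo hab hf ⟨ha, hb⟩]

theorem exists_card_roots_of_alternating_signs {f : ℝ → ℝ} (hf : Continuous f) {t : ℕ → ℝ}
    (ht : StrictAnti t) {k : ℕ} (hsign : ∀ m ≤ k, 0 < (-1) ^ m * f (t m)) :
    ∃ s : Finset ℝ, s.card = k ∧ ∀ x ∈ s, x < t 0 ∧ f x = 0 := by
  have hroot (m : Fin k) : ∃ x ∈ Ioo (t (m + 1)) (t m), f x = 0 := by
    refine exists_mem_Ioo_eq_zero_of_mul_neg (ht (Nat.lt_succ_self m)).le hf.continuousOn ?_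
    have := mul_pos (hsign m m.2.le) (hsign (m + 1) m.2)
    rw [mul_mul_mul_comm, neg_one_pow_mul_neg_one_pow_add, pow_one, neg_one_mul] at this
    linarith
  choose r hr hr0 using hroot
  have hr_anti : StrictAnti r := fun a b hab ↦
    calc r b < t b := (hr b).2
      _ ≤ t (a + 1) := ht.antitone (Nat.succ_le_of_lt hab)
      _ < r a := (hr a).1
  refine ⟨univ.image r, by rw [card_image_of_injective _ hr_anti.injective, card_fin], ?_⟩
  simp only [Finset.forall_mem_image, Finset.mem_univ, forall_const]
  exact fun m ↦ ⟨(hr m).2.trans_le (ht.antitone (Nat.zero_le _)), hr0 m⟩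

namespace DeformedExp

noncomputable def coeff (p : ℝ) (j : ℕ) : ℝ := p ^ j.choose 2 / j.factorial

noncomputable def coeffRatio (p : ℝ) (j : ℕ) : ℝ := j / p ^ (j - 1)

variable {p : ℝ}

theorem coeff_pos (hp : 0 < p) (j : ℕ) : 0 < coeff p j := by
  unfold coeff; positivity

theorem coeffRatio_nonneg (hp : 0 < p) (j : ℕ) : 0 ≤ coeffRatio p j := by
  unfold coeffRatio; positivity

theorem coeff_eq_coeffRatio_mul (hp : p ≠ 0) (j : ℕ) :
    coeff p j = coeffRatio p (j + 1) * coeff p (j + 1) := by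
  have hj : (j + 1).choose 2 = j.choose 2 + j := by
    rw [Nat.choose_succ_succ, Nat.choose_one_right, add_comm]
  unfold coeff coeffRatio
  rw [hj, pow_add, Nat.factorial_succ, Nat.add_sub_cancel]
  push_cast
  field_simp

theorem four_mul_coeffRatio_lt (hp : 0 < p) (hp4 : p ≤ 1 / 4) (m : ℕ) :
    4 * coeffRatio p m < coeffRatio p (m + 1) := by
  rcases m with _ | n
  · simp [coeffRatio]
  · unfold coeffRatio
    rw [Nat.add_sub_cancel, Nat.add_sub_cancel, mul_div_assoc', div_lt_div_iff₀ (by positivity)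
      (by positivity), pow_succ, ← mul_assoc, mul_right_comm]
    exact mul_lt_mul_of_pos_right (by push_cast; nlinarith) (pow_pos hp n)

theorem coeffRatio_strictMono (hp : 0 < p) (hp4 : p ≤ 1 / 4) : StrictMono (coeffRatio p) :=
  strictMono_nat_of_lt_succ fun m ↦ by
    linarith [four_mul_coeffRatio_lt hp hp4 m, coeffRatio_nonneg hp m]

theorem neg_one_pow_mul_sum_coeff_pos (hp : 0 < p) (hp4 : p ≤ 1 / 4) {k m : ℕ} (hm : m ≤ k)
    {s : ℝ} (hs₁ : 2 * coeffRatio p m < s) (hs₂ : 2 * s < coeffRatio p (m + 1)) :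
    0 < (-1) ^ m * ∑ j ∈ range (k + 1), coeff p j * (-s) ^ j := by
  have hs : 0 < s := by linarith [coeffRatio_nonneg hp m]
  have hmono := (coeffRatio_strictMono hp hp4).monotone
  have hterm (j : ℕ) : 0 < coeff p (j + 1) * s ^ j := by have := coeff_pos hp (j + 1); positivity
  simp_rw [neg_pow s, mul_left_comm (coeff p _)]
  refine neg_one_pow_mul_alternating_sum_pos (fun j ↦ (mul_pos (coeff_pos hp j) (pow_pos hs j)).le)
    hm (fun j hj ↦ ?_) (fun j hj ↦ ?_)
  · calc 2 * (coeff p j * s ^ j) = 2 * coeffRatio p (j + 1) * (coeff p (j + 1) * s ^ j) := by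
          rw [coeff_eq_coeffRatio_mul hp.ne']; ring
      _ < s * (coeff p (j + 1) * s ^ j) := by
          refine mul_lt_mul_of_pos_right ?_ (hterm j)
          exact (mul_le_mul_of_nonneg_left (hmono hj) zero_le_two).trans_lt hs₁
      _ = coeff p (j + 1) * s ^ (j + 1) := by ring
  · calc 2 * (coeff p (j + 1) * s ^ (j + 1)) = 2 * s * (coeff p (j + 1) * s ^ j) := by ring
      _ < coeffRatio p (j + 1) * (coeff p (j + 1) * s ^ j) :=
          mul_lt_mul_of_pos_right (hs₂.trans_le (hmono (Nat.succ_le_succ hj))) (hterm j)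
      _ = coeff p j * s ^ j := by rw [coeff_eq_coeffRatio_mul hp.ne' j]; ring

end DeformedExp

open DeformedExp

theorem truncated_deformed_exp_roots_general (p : ℝ) (hp : 0 < p) (hp4 : p ≤ 1 / 4)
    (k : ℕ) :
    ∃ s : Finset ℝ, s.card = k ∧ ∀ x ∈ s, x < 0 ∧
      ∑ j ∈ Finset.range (k + 1), p ^ (j.choose 2) / (j.factorial : ℝ) * x ^ j = 0 := by
  set t : ℕ → ℝ := fun m ↦ -(coeffRatio p m + coeffRatio p (m + 1) / 4)
  have ht : StrictAnti t := fun a b hab ↦ by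
    have := coeffRatio_strictMono hp hp4
    simp only [t, neg_lt_neg_iff]
    linarith [this hab, this (Nat.succ_lt_succ hab)]
  have hsign (m : ℕ) (hm : m ≤ k) : 0 < (-1) ^ m * ∑ j ∈ range (k + 1), coeff p j * t m ^ j := by
    have := four_mul_coeffRatio_lt hp hp4 m
    have := coeffRatio_nonneg hp m
    exact neg_one_pow_mul_sum_coeff_pos hp hp4 hm (s := coeffRatio p m + coeffRatio p (m + 1) / 4)
      (by linarith) (by linarith)
  obtain ⟨s, hcard, hs⟩ := exists_card_roots_of_alternating_signs
    (f := fun x ↦ ∑ j ∈ range (k + 1), coeff p j * x ^ j) (by fun_prop) ht hsign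
  refine ⟨s, hcard, fun x hx ↦ ⟨(hs x hx).1.trans ?_, (hs x hx).2⟩⟩
  simp only [t, Left.neg_neg_iff]
  linarith [coeffRatio_nonneg hp 0, four_mul_coeffRatio_lt hp hp4 0, coeffRatio_nonneg hp 1]

/-- For `0 < p ≤ 1/4` and `k ≥ 2`, the truncated deformed exponential
`f_{p,k}(x) = ∑_{j=0}^k p^(C(j,2))/j! · x^j` has `k` distinct real roots,
all of which are negative. -/
theorem truncated_deformed_exp_roots (p : ℝ) (hp : 0 < p) (hp4 : p ≤ 1 / 4)
    (k : ℕ) (hk : 2 ≤ k) :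
    ∃ s : Finset ℝ, s.card = k ∧ ∀ x ∈ s, x < 0 ∧
      ∑ j ∈ Finset.range (k + 1), p ^ (j.choose 2) / (j.factorial : ℝ) * x ^ j = 0 :=
  truncated_deformed_exp_roots_general p hp hp4 k
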